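/- arXiv:2212.08603 — 2 statements merged into one kernel-verified Lean document; each statement's English description precedes it below -/
import Mathlib

section
/- Let Ω ⊆ ℝ² be open, I ⊆ ℝ a nonempty open interval, D,E,F : Ω → ℝ smooth, and Ξ : Ω × I → ℝ a smooth function satisfying (D(t,r)z + E(t,r))·∂_zΞ(t,r,z) = F(t,r)·Ξ(t,r,z) for all (t,r) ∈ Ω, z ∈ I. Fix z₀ ∈ I. Then: (i) if D(t,r) ≠ 0 for all (t,r) ∈ Ω and D(t,r)z + E(t,r) > 0 on Ω × I, then Ξ(t,r,z) = φ(t,r)·(D(t,r)z + E(t,r))^{F(t,r)/D(t,r)}, where φ(t,r) := Ξ(t,r,z₀)·(D(t,r)z₀ + E(t,r))^{−F(t,r)/D(t,r)} is smooth; (ii) if D ≡ 0 on Ω and E(t,r) ≠ 0 for all (t,r) ∈ Ω, then Ξ(t,r,z) = φ(t,r)·exp(z·F(t,r)/E(t,r)) with φ(t,r) := Ξ(t,r,z₀)·exp(−z₀F(t,r)/E(t,r)); (iii) if D ≡ 0 and E ≡ 0 on Ω and F(t,r) ≠ 0, then Ξ(t,r,z) = 0 for all z ∈ I. -/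
noncomputable section
open Real Set

/-- `∂Ξ/∂z` for functions of `(t,r,z)` -/
def dZ3 (f : ℝ × ℝ × ℝ → ℝ) (s : ℝ × ℝ × ℝ) : ℝ := fderiv ℝ f s (0, 0, 1)

/-- the domain `Ω × I ⊆ ℝ³` -/
def OI (Ω : Set (ℝ × ℝ)) (I : Set ℝ) : Set (ℝ × ℝ × ℝ) :=
  {s | (s.1, s.2.1) ∈ Ω ∧ s.2.2 ∈ I}

lemma oi_open {Ω : Set (ℝ × ℝ)} (hΩ : IsOpen Ω) {I : Set ℝ} (hI : IsOpen I) :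
    IsOpen (OI Ω I) := by
  have h : OI Ω I = (fun s : ℝ×ℝ×ℝ => (s.1, s.2.1)) ⁻¹' Ω ∩ (fun s : ℝ×ℝ×ℝ => s.2.2) ⁻¹' I := by
    ext s; simp [OI]
  rw [h]
  exact (hΩ.preimage (by fun_prop)).inter (hI.preimage (by fun_prop))

lemma const_of_deriv {I : Set ℝ} (hc : Convex ℝ I) {u : ℝ → ℝ}
    (hu : ∀ z ∈ I, HasDerivAt u 0 z) {x y : ℝ} (hx : x ∈ I) (hy : y ∈ I) :
    u x = u y := by
  have h := hc.norm_image_sub_le_of_norm_hasDerivWithin_le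
    (f' := fun _ => (0:ℝ)) (C := 0) (fun z hz => (hu z hz).hasDerivWithinAt)
    (fun z hz => by simp) hy hx
  have h1 : ‖u x - u y‖ ≤ 0 := by simpa using h
  have h2 := le_antisymm h1 (norm_nonneg _)
  simpa [sub_eq_zero] using h2

lemma section_deriv {Ω : Set (ℝ × ℝ)} (hΩ : IsOpen Ω) {I : Set ℝ} (hI : IsOpen I)
    {Ξ : ℝ × ℝ × ℝ → ℝ} (hΞ : ContDiffOn ℝ (⊤ : ℕ∞) Ξ (OI Ω I))
    {q : ℝ × ℝ} (hq : q ∈ Ω) {z : ℝ} (hz : z ∈ I) :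
    HasDerivAt (fun z => Ξ (q.1, q.2, z)) (dZ3 Ξ (q.1, q.2, z)) z := by
  have hs : ((q.1, q.2, z) : ℝ×ℝ×ℝ) ∈ OI Ω I := by
    constructor
    · simpa using hq
    · exact hz
  have hd : DifferentiableAt ℝ Ξ (q.1, q.2, z) :=
    (hΞ.contDiffAt ((oi_open hΩ hI).mem_nhds hs)).differentiableAt (by simp)
  have hL : HasDerivAt (fun z : ℝ => ((q.1 : ℝ), (q.2 : ℝ), z)) ((0:ℝ),(0:ℝ),(1:ℝ)) z :=
    (hasDerivAt_const z q.1).prodMk ((hasDerivAt_const z q.2).prodMk (hasDerivAt_id z))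
  exact hd.hasFDerivAt.comp_hasDerivAt z hL


/-- integration of `(Dz+E)∂_zΞ = FΞ`: power law when `D ≠ 0`,
exponential law when `D ≡ 0`, `E ≠ 0`, and `Ξ ≡ 0` when `D ≡ 0`, `E ≡ 0`, `F ≠ 0`. -/
theorem stmt11 (Ω : Set (ℝ × ℝ)) (hΩopen : IsOpen Ω)
    (I : Set ℝ) (hIopen : IsOpen I) (hIne : I.Nonempty) (hIconn : I.OrdConnected)
    (D E F : ℝ × ℝ → ℝ)
    (hD : ContDiffOn ℝ (⊤ : ℕ∞) D Ω) (hE : ContDiffOn ℝ (⊤ : ℕ∞) E Ω) (hF : ContDiffOn ℝ (⊤ : ℕ∞) F Ω)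
    (Ξ : ℝ × ℝ × ℝ → ℝ) (hΞ : ContDiffOn ℝ (⊤ : ℕ∞) Ξ (OI Ω I))
    (hODE : ∀ q ∈ Ω, ∀ z ∈ I,
      (D q * z + E q) * dZ3 Ξ (q.1, q.2, z) = F q * Ξ (q.1, q.2, z))
    (z0 : ℝ) (hz0 : z0 ∈ I) :
    -- (i) power law
    ((∀ q ∈ Ω, D q ≠ 0) → (∀ q ∈ Ω, ∀ z ∈ I, 0 < D q * z + E q) →
      ((∀ q ∈ Ω, ∀ z ∈ I,
          Ξ (q.1, q.2, z) =
            (Ξ (q.1, q.2, z0) * (D q * z0 + E q) ^ (-(F q / D q))) *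
              (D q * z + E q) ^ (F q / D q)) ∧
        ContDiffOn ℝ (⊤ : ℕ∞) (fun q => Ξ (q.1, q.2, z0) * (D q * z0 + E q) ^ (-(F q / D q))) Ω)) ∧
    -- (ii) exponential law
    ((∀ q ∈ Ω, D q = 0) → (∀ q ∈ Ω, E q ≠ 0) →
      ∀ q ∈ Ω, ∀ z ∈ I,
        Ξ (q.1, q.2, z) =
          (Ξ (q.1, q.2, z0) * Real.exp (-(z0 * F q / E q))) * Real.exp (z * F q / E q)) ∧
    -- (iii) forced vanishing
    ((∀ q ∈ Ω, D q = 0) → (∀ q ∈ Ω, E q = 0) →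
      ∀ q ∈ Ω, F q ≠ 0 → ∀ z ∈ I, Ξ (q.1, q.2, z) = 0) := by
  have hconv : Convex ℝ I := hIconn.convex
  refine ⟨?_, ?_, ?_⟩
  · -- (i)
    intro hDne hpos
    constructor
    · intro q hq z hz
      have hd0 := hDne q hq
      set c : ℝ := F q / D q with hc
      have hu : ∀ w ∈ I, HasDerivAt
          (fun w => Ξ (q.1, q.2, w) * (D q * w + E q) ^ (-c)) 0 w := by
        intro w hw
        have hA : 0 < D q * w + E q := hpos q hq w hw
        have h1 : HasDerivAt (fun w => D q * w + E q) (D q) w := by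
          simpa using ((hasDerivAt_id w).const_mul (D q)).add_const (E q)
        have h2 : HasDerivAt (fun w => (D q * w + E q) ^ (-c))
            ((-c) * (D q * w + E q) ^ (-c - 1) * D q) w := by
          have h3 := (Real.hasDerivAt_rpow_const (x := D q * w + E q) (p := -c)
            (Or.inl hA.ne')).comp w h1
          simpa [mul_comm, mul_assoc, Function.comp_def] using h3
        have h4 := (section_deriv hΩopen hIopen hΞ hq hw).mul h2
        have hdz : dZ3 Ξ (q.1, q.2, w) = F q * Ξ (q.1, q.2, w) / (D q * w + E q) := by
          rw [eq_div_iff hA.ne', mul_comm]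
          exact hODE q hq w hw
        have hval : dZ3 Ξ (q.1, q.2, w) * (D q * w + E q) ^ (-c) +
            Ξ (q.1, q.2, w) * ((-c) * (D q * w + E q) ^ (-c - 1) * D q) = 0 := by
          rw [hdz, Real.rpow_sub hA, Real.rpow_one, hc]
          field_simp
          ring
        exact hval ▸ h4
      have huz := const_of_deriv hconv hu hz hz0
      have hA : 0 < D q * z + E q := hpos q hq z hz
      have hmul : (D q * z + E q) ^ (-c) * (D q * z + E q) ^ c = 1 := by
        rw [← Real.rpow_add hA]; simp
      calc Ξ (q.1, q.2, z)
          = Ξ (q.1, q.2, z) * ((D q * z + E q) ^ (-c) * (D q * z + E q) ^ c) := by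
            rw [hmul, mul_one]
        _ = (Ξ (q.1, q.2, z) * (D q * z + E q) ^ (-c)) * (D q * z + E q) ^ c := by ring
        _ = (Ξ (q.1, q.2, z0) * (D q * z0 + E q) ^ (-c)) * (D q * z + E q) ^ c := by
            rw [huz]
    · -- smoothness of φ
      intro q hq
      have hqn : Ω ∈ nhds q := hΩopen.mem_nhds hq
      have hmap : ContDiff ℝ (⊤ : ℕ∞) (fun q : ℝ × ℝ => (q.1, q.2, z0)) :=
        contDiff_fst.prodMk (contDiff_snd.prodMk contDiff_const)
      have hsmem : ((q.1, q.2, z0) : ℝ×ℝ×ℝ) ∈ OI Ω I := ⟨by simpa using hq, hz0⟩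
      have h1 : ContDiffAt ℝ (⊤ : ℕ∞) (fun q : ℝ × ℝ => Ξ (q.1, q.2, z0)) q :=
        (hΞ.contDiffAt ((oi_open hΩopen hIopen).mem_nhds hsmem)).comp q hmap.contDiffAt
      have hbase : ContDiffAt ℝ (⊤ : ℕ∞) (fun q : ℝ × ℝ => D q * z0 + E q) q :=
        ((hD.contDiffAt hqn).mul contDiffAt_const).add (hE.contDiffAt hqn)
      have hexp : ContDiffAt ℝ (⊤ : ℕ∞) (fun q : ℝ × ℝ => -(F q / D q)) q :=
        ((hF.contDiffAt hqn).div (hD.contDiffAt hqn) (hDne q hq)).neg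
      have h2 : ContDiffAt ℝ (⊤ : ℕ∞) (fun q : ℝ × ℝ => (D q * z0 + E q) ^ (-(F q / D q))) q :=
        hbase.rpow hexp (hpos q hq z0 hz0).ne'
      exact (h1.mul h2).contDiffWithinAt
  · -- (ii)
    intro hD0 hEne q hq z hz
    have he0 := hEne q hq
    have hu : ∀ w ∈ I, HasDerivAt
        (fun w => Ξ (q.1, q.2, w) * Real.exp (-(w * F q / E q))) 0 w := by
      intro w hw
      have h1 : HasDerivAt (fun w : ℝ => -(w * F q / E q)) (-(F q / E q)) w := by
        simpa [mul_div_assoc, Pi.neg_def] using ((hasDerivAt_id w).mul_const (F q / E q)).neg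
      have h2 := (Real.hasDerivAt_exp (-(w * F q / E q))).comp w h1
      have h4 := (section_deriv hΩopen hIopen hΞ hq hw).mul h2
      have hODE' := hODE q hq w hw
      rw [hD0 q hq] at hODE'
      have hdz : dZ3 Ξ (q.1, q.2, w) = F q * Ξ (q.1, q.2, w) / E q := by
        rw [eq_div_iff he0, mul_comm]
        simpa using hODE'
      have hval : dZ3 Ξ (q.1, q.2, w) * Real.exp (-(w * F q / E q)) +
          Ξ (q.1, q.2, w) * (Real.exp (-(w * F q / E q)) * (-(F q / E q))) = 0 := by
        rw [hdz]; field_simp; ring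
      exact hval ▸ h4
    have huz := const_of_deriv hconv hu hz hz0
    have hmul : Real.exp (-(z * F q / E q)) * Real.exp (z * F q / E q) = 1 := by
      rw [← Real.exp_add]; ring_nf; exact Real.exp_zero
    calc Ξ (q.1, q.2, z)
        = Ξ (q.1, q.2, z) * (Real.exp (-(z * F q / E q)) * Real.exp (z * F q / E q)) := by
          rw [hmul, mul_one]
      _ = (Ξ (q.1, q.2, z) * Real.exp (-(z * F q / E q))) * Real.exp (z * F q / E q) := by ring
      _ = (Ξ (q.1, q.2, z0) * Real.exp (-(z0 * F q / E q))) * Real.exp (z * F q / E q) := by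
          rw [huz]
  · -- (iii)
    intro hD0 hE0 q hq hFne z hz
    have h := hODE q hq z hz
    rw [hD0 q hq, hE0 q hq] at h
    simp at h
    exact h.resolve_left hFne
end
end

section
/- Let J ⊆ ℝ be an open interval such that Q(t,r,p) := a₂(t,r)p² − (a₄(t,r) − a₁(t,r))p − a₃(t,r) ≠ 0 for all (t,r) ∈ Ω and p ∈ J, and let I : Ω × J → ℝ be a smooth function with ∂_pI(t,r,p) = (a₁(t,r) + a₂(t,r)p)/Q(t,r,p). On 𝒟 := {(t,r,ṫ,ṙ) : (t,r) ∈ Ω, ṫ > 0, ṙ/ṫ ∈ J} define û(t,r,ṫ,ṙ) := ṫ·exp(I(t,r,ṙ/ṫ)). Then (a₁ṫ + a₂ṙ)∂_ṫû + (a₃ṫ + a₄ṙ)∂_ṙû = 0 on 𝒟; consequently, for every smooth function Ξ = Ξ(t,r,u,w), the Lagrangian L(t,r,ṫ,ṙ,w) := Ξ(t,r,û(t,r,ṫ,ṙ),w) satisfies the bracket constraint (a₁ṫ + a₂ṙ)∂_ṫL + (a₃ṫ + a₄ṙ)∂_ṙL = 0 on 𝒟 × (0,∞). Conversely, at every point of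 𝒟 × (0,∞) where (a₁ṫ + a₂ṙ, a₃ṫ + a₄ṙ) ≠ (0,0), any smooth L(t,r,ṫ,ṙ,w) satisfying (a₁ṫ + a₂ṙ)∂_ṫL + (a₃ṫ + a₄ṙ)∂_ṙL = 0 coincides on a neighborhood of that point with a function of (t,r,û,w) only. -/
noncomputable section
open Real Set

/-- points `(t,r,ṫ,ṙ)` -/
abbrev P4 := ℝ × ℝ × ℝ × ℝ
/-- points `(t,r,ṫ,ṙ,w)` -/
abbrev P5 := ℝ × ℝ × ℝ × ℝ × ℝ

/-- `∂f/∂ṫ` for functions of `(t,r,ṫ,ṙ)` -/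
def dTd4 (f : P4 → ℝ) (p : P4) : ℝ := fderiv ℝ f p (0, 0, 1, 0)
/-- `∂f/∂ṙ` for functions of `(t,r,ṫ,ṙ)` -/
def dRd4 (f : P4 → ℝ) (p : P4) : ℝ := fderiv ℝ f p (0, 0, 0, 1)
/-- `∂f/∂ṫ` for functions of `(t,r,ṫ,ṙ,w)` -/
def pTd (f : P5 → ℝ) (p : P5) : ℝ := fderiv ℝ f p (0, 0, 1, 0, 0)
/-- `∂f/∂ṙ` for functions of `(t,r,ṫ,ṙ,w)` -/
def pRd (f : P5 → ℝ) (p : P5) : ℝ := fderiv ℝ f p (0, 0, 0, 1, 0)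
/-- `∂f/∂p` for functions of `(t,r,p)` -/
def dP3 (f : ℝ × ℝ × ℝ → ℝ) (s : ℝ × ℝ × ℝ) : ℝ := fderiv ℝ f s (0, 0, 1)

/-- the characteristic variable `û = ṫ·exp(I(t,r,ṙ/ṫ))` -/
def uhat (I3 : ℝ × ℝ × ℝ → ℝ) (p : P4) : ℝ :=
  p.2.2.1 * Real.exp (I3 (p.1, p.2.1, p.2.2.2 / p.2.2.1))

/-- the domain `𝒟 = {(t,r,ṫ,ṙ) : (t,r) ∈ Ω, ṫ > 0, ṙ/ṫ ∈ J}` -/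
def Dom4 (Ω : Set (ℝ × ℝ)) (J : Set ℝ) : Set P4 :=
  {p | (p.1, p.2.1) ∈ Ω ∧ 0 < p.2.2.1 ∧ p.2.2.2 / p.2.2.1 ∈ J}

/-- the domain `𝒟 × (0,∞)` -/
def Dom5 (Ω : Set (ℝ × ℝ)) (J : Set ℝ) : Set P5 :=
  {p | (p.1, p.2.1, p.2.2.1, p.2.2.2.1) ∈ Dom4 Ω J ∧ 0 < p.2.2.2.2}


lemma isOpen_OJ (Ω : Set (ℝ × ℝ)) (J : Set ℝ) (hΩ : IsOpen Ω) (hJ : IsOpen J) :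
    IsOpen {s : ℝ × ℝ × ℝ | (s.1, s.2.1) ∈ Ω ∧ s.2.2 ∈ J} :=
  (hΩ.preimage (by fun_prop : Continuous fun s : ℝ×ℝ×ℝ => (s.1, s.2.1))).inter
    (hJ.preimage (by fun_prop))

lemma isOpen_Dom4 (Ω : Set (ℝ × ℝ)) (J : Set ℝ) (hΩ : IsOpen Ω) (hJ : IsOpen J) :
    IsOpen (Dom4 Ω J) := by
  have h1 : IsOpen {p : P4 | (p.1, p.2.1) ∈ Ω} := hΩ.preimage (by fun_prop)
  have h2 : IsOpen {p : P4 | 0 < p.2.2.1} := isOpen_lt continuous_const (by fun_prop)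
  have h3 : IsOpen ({p : P4 | 0 < p.2.2.1} ∩ (fun p : P4 => p.2.2.2 / p.2.2.1) ⁻¹' J) := by
    apply ContinuousOn.isOpen_inter_preimage _ h2 hJ
    exact ContinuousOn.div (by fun_prop) (by fun_prop) (fun p hp => ne_of_gt hp)
  have : Dom4 Ω J = {p : P4 | (p.1, p.2.1) ∈ Ω} ∩
      ({p : P4 | 0 < p.2.2.1} ∩ (fun p : P4 => p.2.2.2 / p.2.2.1) ⁻¹' J) := by
    ext p; simp [Dom4]
  rw [this]; exact h1.inter h3

lemma isOpen_Dom5 (Ω : Set (ℝ × ℝ)) (J : Set ℝ) (hΩ : IsOpen Ω) (hJ : IsOpen J) :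
    IsOpen (Dom5 Ω J) := by
  have h1 : IsOpen {p : P5 | (p.1, p.2.1, p.2.2.1, p.2.2.2.1) ∈ Dom4 Ω J} :=
    (isOpen_Dom4 Ω J hΩ hJ).preimage (by fun_prop)
  have h2 : IsOpen {p : P5 | 0 < p.2.2.2.2} := isOpen_lt continuous_const (by fun_prop)
  exact h1.inter h2

lemma uhat_contDiffAt (Ω : Set (ℝ × ℝ)) (J : Set ℝ) (hΩ : IsOpen Ω) (hJ : IsOpen J)
    (I3 : ℝ × ℝ × ℝ → ℝ)
    (hI3 : ContDiffOn ℝ (⊤ : ℕ∞) I3 {s : ℝ × ℝ × ℝ | (s.1, s.2.1) ∈ Ω ∧ s.2.2 ∈ J})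
    (p : P4) (hp : p ∈ Dom4 Ω J) : ContDiffAt ℝ (⊤ : ℕ∞) (uhat I3) p := by
  obtain ⟨h1, h2, h3⟩ := hp
  have hI : ContDiffAt ℝ (⊤ : ℕ∞) I3 (p.1, p.2.1, p.2.2.2 / p.2.2.1) :=
    hI3.contDiffAt ((isOpen_OJ Ω J hΩ hJ).mem_nhds ⟨h1, h3⟩)
  have hcurve : ContDiffAt ℝ (⊤ : ℕ∞) (fun q : P4 => ((q.1, q.2.1, q.2.2.2 / q.2.2.1) : ℝ×ℝ×ℝ)) p := by
    apply ContDiffAt.prodMk (by fun_prop)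
    apply ContDiffAt.prodMk (by fun_prop)
    exact ContDiffAt.div (by fun_prop) (by fun_prop) (ne_of_gt h2)
  exact ContDiffAt.mul (by fun_prop) ((Real.contDiff_exp.contDiffAt).comp p (hI.comp p hcurve))


lemma uhat_dT (I3 : ℝ × ℝ × ℝ → ℝ) (t r a b : ℝ) (ha : a ≠ 0)
    (hI : DifferentiableAt ℝ I3 (t, r, b / a))
    (hd : DifferentiableAt ℝ (uhat I3) (t, r, a, b)) :
    dTd4 (uhat I3) (t, r, a, b)
      = Real.exp (I3 (t, r, b/a)) * (1 - (b/a) * dP3 I3 (t, r, b/a)) := by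
  have hU := hd.hasFDerivAt
  set U := fderiv ℝ (uhat I3) (t, r, a, b) with hUdef
  have hline : HasDerivAt (fun τ : ℝ => ((t, r, τ, b) : P4)) ((0,0,1,0) : P4) a :=
    (hasDerivAt_const a t).prodMk ((hasDerivAt_const a r).prodMk
      ((hasDerivAt_id a).prodMk (hasDerivAt_const a b)))
  have hcomp : HasDerivAt (fun τ : ℝ => uhat I3 (t, r, τ, b)) (U (0,0,1,0)) a :=
    by have := hU.comp_hasDerivAt a hline; exact this
  have hcurve : HasDerivAt (fun τ : ℝ => ((t, r, b / τ) : ℝ×ℝ×ℝ))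
      ((0, 0, (0 * a - b * 1) / a^2) : ℝ×ℝ×ℝ) a :=
    (hasDerivAt_const a t).prodMk ((hasDerivAt_const a r).prodMk
      ((hasDerivAt_const a b).div (hasDerivAt_id a) ha))
  have hIc : HasDerivAt (fun τ : ℝ => I3 (t, r, b / τ))
      (fderiv ℝ I3 (t, r, b/a) ((0 : ℝ), (0:ℝ), (0 * a - b * 1) / a^2)) a :=
    hI.hasFDerivAt.comp_hasDerivAt a hcurve
  have hval : fderiv ℝ I3 (t, r, b/a) ((0 : ℝ), (0:ℝ), (0 * a - b * 1) / a^2)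
      = (-b/a^2) * dP3 I3 (t, r, b/a) := by
    have h9 : ((0 : ℝ), (0:ℝ), (0 * a - b * 1) / a^2)
        = (-b/a^2) • (((0 : ℝ), (0:ℝ), (1:ℝ)) : ℝ×ℝ×ℝ) := by
      simp [Prod.ext_iff]
      try ring
    rw [h9, map_smul, dP3]; rfl
  rw [hval] at hIc
  have hmul : HasDerivAt (fun τ : ℝ => τ * Real.exp (I3 (t, r, b / τ)))
      (1 * Real.exp (I3 (t, r, b / a))
        + a * (Real.exp (I3 (t, r, b/a)) * ((-b/a^2) * dP3 I3 (t, r, b/a)))) a :=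
    (hasDerivAt_id a).mul hIc.exp
  have heq : (fun τ : ℝ => uhat I3 (t, r, τ, b))
      = fun τ : ℝ => τ * Real.exp (I3 (t, r, b / τ)) := rfl
  rw [heq] at hcomp
  rw [dTd4, ← hUdef, hcomp.unique hmul]
  field_simp
  ring

lemma uhat_dR (I3 : ℝ × ℝ × ℝ → ℝ) (t r a b : ℝ) (ha : a ≠ 0)
    (hI : DifferentiableAt ℝ I3 (t, r, b / a))
    (hd : DifferentiableAt ℝ (uhat I3) (t, r, a, b)) :
    dRd4 (uhat I3) (t, r, a, b)
      = Real.exp (I3 (t, r, b/a)) * dP3 I3 (t, r, b/a) := by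
  have hU := hd.hasFDerivAt
  set U := fderiv ℝ (uhat I3) (t, r, a, b) with hUdef
  have hline : HasDerivAt (fun τ : ℝ => ((t, r, a, τ) : P4)) ((0,0,0,1) : P4) b :=
    (hasDerivAt_const b t).prodMk ((hasDerivAt_const b r).prodMk
      ((hasDerivAt_const b a).prodMk (hasDerivAt_id b)))
  have hcomp : HasDerivAt (fun τ : ℝ => uhat I3 (t, r, a, τ)) (U (0,0,0,1)) b :=
    by have := hU.comp_hasDerivAt b hline; exact this
  have hcurve : HasDerivAt (fun τ : ℝ => ((t, r, τ / a) : ℝ×ℝ×ℝ))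
      ((0, 0, (1 * a - b * 0) / a^2) : ℝ×ℝ×ℝ) b :=
    (hasDerivAt_const b t).prodMk ((hasDerivAt_const b r).prodMk
      ((hasDerivAt_id b).div (hasDerivAt_const b a) ha))
  have hIc : HasDerivAt (fun τ : ℝ => I3 (t, r, τ / a))
      (fderiv ℝ I3 (t, r, b/a) ((0 : ℝ), (0:ℝ), (1 * a - b * 0) / a^2)) b :=
    hI.hasFDerivAt.comp_hasDerivAt b hcurve
  have hval : fderiv ℝ I3 (t, r, b/a) ((0 : ℝ), (0:ℝ), (1 * a - b * 0) / a^2)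
      = a⁻¹ * dP3 I3 (t, r, b/a) := by
    have h9 : ((0 : ℝ), (0:ℝ), (1 * a - b * 0) / a^2)
        = a⁻¹ • (((0 : ℝ), (0:ℝ), (1:ℝ)) : ℝ×ℝ×ℝ) := by
      simp [Prod.ext_iff]
      try field_simp
      try ring
    rw [h9, map_smul, dP3]; rfl
  rw [hval] at hIc
  have hmul : HasDerivAt (fun τ : ℝ => a * Real.exp (I3 (t, r, τ / a)))
      (a * (Real.exp (I3 (t, r, b/a)) * (a⁻¹ * dP3 I3 (t, r, b/a)))) b :=
    hIc.exp.const_mul a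
  have heq : (fun τ : ℝ => uhat I3 (t, r, a, τ))
      = fun τ : ℝ => a * Real.exp (I3 (t, r, τ / a)) := rfl
  rw [heq] at hcomp
  rw [dRd4, ← hUdef, hcomp.unique hmul]
  field_simp


lemma phiT_deriv (u : P4 → ℝ) (q : P5)
    (hu : DifferentiableAt ℝ u (q.1, q.2.1, q.2.2.1, q.2.2.2.1)) :
    ∃ D : P5 →L[ℝ] P5,
      HasFDerivAt (fun x : P5 =>
        ((x.1, x.2.1, x.2.2.1, u (x.1, x.2.1, x.2.2.1, x.2.2.2.1), x.2.2.2.2) : P5)) D q ∧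
      ∀ v : P5, D v = (v.1, v.2.1, v.2.2.1,
        fderiv ℝ u (q.1, q.2.1, q.2.2.1, q.2.2.2.1) (v.1, v.2.1, v.2.2.1, v.2.2.2.1),
        v.2.2.2.2) := by
  have hq : HasFDerivAt (id : P5 → P5) (ContinuousLinearMap.id ℝ P5) q := hasFDerivAt_id q
  have hπ := hq.fst.prodMk (hq.snd.fst.prodMk (hq.snd.snd.fst.prodMk hq.snd.snd.snd.fst))
  have hu5 := hu.hasFDerivAt.comp q hπ
  have hm := hq.fst.prodMk (hq.snd.fst.prodMk (hq.snd.snd.fst.prodMk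
    (hu5.prodMk hq.snd.snd.snd.snd)))
  refine ⟨_, hm, fun v => ?_⟩
  simp only [ContinuousLinearMap.coe_comp', Function.comp_apply,
    ContinuousLinearMap.prod_apply, ContinuousLinearMap.coe_fst',
    ContinuousLinearMap.coe_snd', ContinuousLinearMap.coe_id', id_eq]

/-- fderiv of u at a general 4-vector with only 3rd and 4th components nonzero -/
lemma fderiv4_eval (u : P4 → ℝ) (z : P4) (a b : ℝ) :
    fderiv ℝ u z ((0:ℝ), (0:ℝ), a, b) = a * dTd4 u z + b * dRd4 u z := by
  have h : ((0:ℝ), (0:ℝ), a, b) = a • (((0:ℝ),(0:ℝ),(1:ℝ),(0:ℝ)) : P4)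
      + b • (((0:ℝ),(0:ℝ),(0:ℝ),(1:ℝ)) : P4) := by
    simp [Prod.ext_iff]
  rw [h, map_add, map_smul, map_smul, dTd4, dRd4, smul_eq_mul, smul_eq_mul]

lemma fderiv5_eval (L : P5 → ℝ) (q : P5) (a b : ℝ) :
    fderiv ℝ L q ((0:ℝ), (0:ℝ), a, b, (0:ℝ)) = a * pTd L q + b * pRd L q := by
  have h : ((0:ℝ), (0:ℝ), a, b, (0:ℝ)) = a • (((0:ℝ),(0:ℝ),(1:ℝ),(0:ℝ),(0:ℝ)) : P5)
      + b • (((0:ℝ),(0:ℝ),(0:ℝ),(1:ℝ),(0:ℝ)) : P5) := by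
    simp [Prod.ext_iff]
  rw [h, map_add, map_smul, map_smul, pTd, pRd, smul_eq_mul, smul_eq_mul]

/-- Local representation, case `û_ṙ ≠ 0`: fix the third coordinate. -/
lemma loc_rep_T (u : P4 → ℝ) (U : Set P5) (hUopen : IsOpen U)
    (hu : ∀ q ∈ U, ContDiffAt ℝ (⊤ : ℕ∞) u (q.1, q.2.1, q.2.2.1, q.2.2.2.1))
    (hur : ∀ q ∈ U, dRd4 u (q.1, q.2.1, q.2.2.1, q.2.2.2.1) ≠ 0)
    (L : P5 → ℝ) (hL : ∀ q ∈ U, DifferentiableAt ℝ L q)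
    (hPDE : ∀ q ∈ U, pTd L q * dRd4 u (q.1, q.2.1, q.2.2.1, q.2.2.2.1)
      = pRd L q * dTd4 u (q.1, q.2.1, q.2.2.1, q.2.2.2.1))
    (p : P5) (hp : p ∈ U) :
    ∃ V : Set P5, IsOpen V ∧ p ∈ V ∧ V ⊆ U ∧
      ∃ G : ℝ × ℝ × ℝ × ℝ → ℝ, ∀ p' ∈ V,
        L p' = G (p'.1, p'.2.1, u (p'.1, p'.2.1, p'.2.2.1, p'.2.2.2.1), p'.2.2.2.2) := by
  classical
  set Φ : P5 → P5 := fun x =>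
    ((x.1, x.2.1, x.2.2.1, u (x.1, x.2.1, x.2.2.1, x.2.2.2.1), x.2.2.2.2) : P5) with hΦdef
  -- derivative data at every point of U
  have hD : ∀ q ∈ U, ∃ D : P5 →L[ℝ] P5, HasFDerivAt Φ D q ∧
      ∀ v : P5, D v = (v.1, v.2.1, v.2.2.1,
        fderiv ℝ u (q.1, q.2.1, q.2.2.1, q.2.2.2.1) (v.1, v.2.1, v.2.2.1, v.2.2.2.1),
        v.2.2.2.2) :=
    fun q hq => phiT_deriv u q ((hu q hq).differentiableAt (by simp))
  choose! D hDF hDval using hD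
  -- each D q is a continuous linear equivalence
  have hbij : ∀ q ∈ U, Function.Bijective (D q) := by
    intro q hq
    have hinj : Function.Injective (D q) := by
      rw [injective_iff_map_eq_zero]
      rintro ⟨v1, v2, v3, v4, v5⟩ hv0
      have h := (hDval q hq (v1, v2, v3, v4, v5)).symm.trans hv0
      simp only [Prod.ext_iff, Prod.fst_zero, Prod.snd_zero] at h
      obtain ⟨h1, h2, h3, h4, h5⟩ := h
      subst h1 h2 h3
      rw [show ((0:ℝ), (0:ℝ), (0:ℝ), v4) = (((0:ℝ), (0:ℝ), (0:ℝ), v4) : P4) from rfl,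
        show (((0:ℝ), (0:ℝ), (0:ℝ), v4) : P4) = ((0:ℝ), (0:ℝ), (0:ℝ), v4) from rfl] at h4
      have h4' : fderiv ℝ u (q.1, q.2.1, q.2.2.1, q.2.2.2.1) ((0:ℝ), (0:ℝ), (0:ℝ), v4) = 0 := h4
      rw [fderiv4_eval] at h4'
      have hv4 : v4 = 0 := by
        rcases mul_eq_zero.mp (by linarith [h4'] : v4 * dRd4 u (q.1, q.2.1, q.2.2.1, q.2.2.2.1) = 0) with h | h
        · exact h
        · exact absurd h (hur q hq)
      subst hv4 h5
      rfl
    exact ⟨hinj, (LinearMap.injective_iff_surjective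
      (f := ((D q).toLinearMap : P5 →ₗ[ℝ] P5))).mp hinj⟩
  -- upgrade to continuous linear equivs
  have hequiv : ∀ q ∈ U, ∃ e : P5 ≃L[ℝ] P5, (e : P5 →L[ℝ] P5) = D q := by
    intro q hq
    refine ⟨(LinearEquiv.ofBijective ((D q).toLinearMap) (hbij q hq)).toContinuousLinearEquiv,
      ContinuousLinearMap.ext fun v => ?_⟩
    show (LinearEquiv.ofBijective ((D q).toLinearMap) (hbij q hq)).toContinuousLinearEquiv v = D q v
    rw [LinearEquiv.coe_toContinuousLinearEquiv']
    rfl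
  choose! E hE using hequiv
  have hEF : ∀ q ∈ U, HasFDerivAt Φ ((E q : P5 →L[ℝ] P5)) q := by
    intro q hq; rw [hE q hq]; exact hDF q hq
  -- the local homeomorphism at p
  have hΦcd : ContDiffAt ℝ (⊤ : ℕ∞) Φ p := by
    refine ContDiffAt.prodMk (by fun_prop) (ContDiffAt.prodMk (by fun_prop)
      (ContDiffAt.prodMk (by fun_prop) (ContDiffAt.prodMk ?_ (by fun_prop))))
    exact (hu p hp).comp p (by fun_prop)
  set Φloc := hΦcd.toOpenPartialHomeomorph Φ (hEF p hp) (by simp) with hΦloc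
  have hcoe : (Φloc : P5 → P5) = Φ := hΦcd.toOpenPartialHomeomorph_coe (hEF p hp) (by simp)
  have hpsrc : p ∈ Φloc.source := hΦcd.mem_toOpenPartialHomeomorph_source (hEF p hp) (by simp)
  -- shrink target
  have hWopen : IsOpen (Φloc.target ∩ Φloc.symm ⁻¹' (Φloc.source ∩ U)) :=
    Φloc.symm.isOpen_inter_preimage (Φloc.open_source.inter hUopen)
  have hΦpW : Φ p ∈ Φloc.target ∩ Φloc.symm ⁻¹' (Φloc.source ∩ U) := by
    have h1 : Φ p ∈ Φloc.target := by rw [← hcoe]; exact Φloc.map_source hpsrc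
    refine ⟨h1, ?_⟩
    have h2 : Φloc.symm (Φ p) = p := by
      rw [← hcoe]; exact Φloc.left_inv hpsrc
    simp [h2, hpsrc, hp]
  obtain ⟨ρ, hρpos, hball⟩ := Metric.isOpen_iff.mp hWopen _ hΦpW
  set B := Metric.ball (Φ p) ρ with hB
  -- the composite L ∘ Φloc.symm has vanishing third partial on B
  have hsymm : ∀ y ∈ B, HasFDerivAt (fun z => L (Φloc.symm z))
      ((fderiv ℝ L (Φloc.symm y)).comp ((E (Φloc.symm y)).symm : P5 →L[ℝ] P5)) y := by
    intro y hy
    obtain ⟨hyt, hyq⟩ := hball hy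
    obtain ⟨hqsrc, hqU⟩ := hyq
    have hsym : HasFDerivAt Φloc.symm (((E (Φloc.symm y)).symm : P5 →L[ℝ] P5)) y :=
      Φloc.hasFDerivAt_symm hyt (by rw [hcoe]; exact hEF _ hqU)
    exact ((hL _ hqU).hasFDerivAt.comp y hsym)
  have hval3 : ∀ y ∈ B, ((fderiv ℝ L (Φloc.symm y)).comp
      ((E (Φloc.symm y)).symm : P5 →L[ℝ] P5)) ((0:ℝ),(0:ℝ),(1:ℝ),(0:ℝ),(0:ℝ)) = 0 := by
    intro y hy
    obtain ⟨hyt, hqsrc, hqU⟩ := hball hy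
    set q := Φloc.symm y with hqdef
    set z4 : P4 := (q.1, q.2.1, q.2.2.1, q.2.2.2.1) with hz4
    set δ : ℝ := - dTd4 u z4 / dRd4 u z4 with hδ
    have hEsymm : (E q).symm ((0:ℝ),(0:ℝ),(1:ℝ),(0:ℝ),(0:ℝ))
        = (((0:ℝ),(0:ℝ),(1:ℝ),δ,(0:ℝ)) : P5) := by
      rw [ContinuousLinearEquiv.symm_apply_eq]
      have := hDval q hqU (((0:ℝ),(0:ℝ),(1:ℝ),δ,(0:ℝ)) : P5)
      have happ : E q (((0:ℝ),(0:ℝ),(1:ℝ),δ,(0:ℝ)) : P5)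
          = D q (((0:ℝ),(0:ℝ),(1:ℝ),δ,(0:ℝ)) : P5) := by
        rw [← hE q hqU]; rfl
      rw [happ, this]
      have hR : dRd4 u z4 ≠ 0 := hur q hqU
      refine Prod.ext rfl (Prod.ext rfl (Prod.ext rfl (Prod.ext ?_ rfl)))
      show (0:ℝ) = fderiv ℝ u (q.1, q.2.1, q.2.2.1, q.2.2.2.1) ((0:ℝ),(0:ℝ),(1:ℝ),δ)
      rw [fderiv4_eval, hδ]
      field_simp
      simp only [hz4]
      ring
    rw [ContinuousLinearMap.comp_apply]
    have : ((E q).symm : P5 →L[ℝ] P5) ((0:ℝ),(0:ℝ),(1:ℝ),(0:ℝ),(0:ℝ))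
        = (((0:ℝ),(0:ℝ),(1:ℝ),δ,(0:ℝ)) : P5) := hEsymm
    rw [this, fderiv5_eval]
    have hR := hur q hqU
    have hP := hPDE q hqU
    rw [hδ, hz4]
    field_simp
    linarith [hP]
  -- constancy of L ∘ Φloc.symm in the third coordinate on B
  have hconst : ∀ y ∈ B, L (Φloc.symm (y.1, y.2.1, p.2.2.1, y.2.2.2.1, y.2.2.2.2))
      = L (Φloc.symm y) := by
    intro y hy
    set ℓ : ℝ → P5 := fun s => (y.1, y.2.1, s, y.2.2.2.1, y.2.2.2.2) with hℓ
    set T : Set ℝ := ℓ ⁻¹' B with hT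
    have hTopen : IsOpen T := (Metric.isOpen_ball).preimage (by fun_prop)
    have hTconv : Convex ℝ T := by
      intro s1 h1 s2 h2 α β hα hβ hab
      have hα' : α = 1 - β := by linarith
      subst hα'
      have : ℓ ((1 - β) * s1 + β * s2) = (1 - β) • ℓ s1 + β • ℓ s2 := by
        simp only [hℓ, Prod.smul_mk, Prod.mk_add_mk, smul_eq_mul]
        refine Prod.ext ?_ (Prod.ext ?_ (Prod.ext ?_ (Prod.ext ?_ ?_))) <;> simp <;> ring
      show ℓ ((1 - β) • s1 + β • s2) ∈ B
      rw [smul_eq_mul, smul_eq_mul, this]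
      exact (convex_ball (Φ p) ρ) h1 h2 hα hβ hab
    have hy3 : y.2.2.1 ∈ T := by
      have : ℓ y.2.2.1 = y := rfl
      simp only [hT, mem_preimage, this]
      exact hy
    have hp3 : p.2.2.1 ∈ T := by
      simp only [hT, mem_preimage, hℓ]
      have hd : dist ((y.1, y.2.1, p.2.2.1, y.2.2.2.1, y.2.2.2.2) : P5) (Φ p) ≤ dist y (Φ p) := by
        have h5 : (Φ p).2.2.1 = p.2.2.1 := rfl
        simp only [Prod.dist_eq]
        apply max_le_max le_rfl
        apply max_le_max le_rfl
        apply max_le_max _ le_rfl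
        rw [h5, dist_self]
        exact dist_nonneg
      exact lt_of_le_of_lt hd (Metric.mem_ball.mp hy)
    have hg : ∀ s ∈ T, HasDerivAt (fun s' => L (Φloc.symm (ℓ s'))) 0 s := by
      intro s hs
      have hline : HasDerivAt ℓ (((0:ℝ),(0:ℝ),(1:ℝ),(0:ℝ),(0:ℝ)) : P5) s := by
        refine (hasDerivAt_const s y.1).prodMk ((hasDerivAt_const s y.2.1).prodMk
          ((hasDerivAt_id s).prodMk ((hasDerivAt_const s y.2.2.2.1).prodMk
            (hasDerivAt_const s y.2.2.2.2))))
      have hF := hsymm (ℓ s) hs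
      have := hF.comp_hasDerivAt s hline
      rw [hval3 (ℓ s) hs] at this
      exact this
    -- g is constant on convex open T
    have hgd : DifferentiableOn ℝ (fun s' => L (Φloc.symm (ℓ s'))) T :=
      fun s hs => ((hg s hs).differentiableAt).differentiableWithinAt
    have hfd0 : ∀ s ∈ T, fderivWithin ℝ (fun s' => L (Φloc.symm (ℓ s'))) T s = 0 := by
      intro s hs
      rw [fderivWithin_of_isOpen hTopen hs,
        (hasDerivAt_iff_hasFDerivAt.mp (hg s hs)).fderiv]
      ext1
      simp
    have := hTconv.is_const_of_fderivWithin_eq_zero hgd hfd0 hp3 hy3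
    simpa [hℓ] using this
  -- assemble
  refine ⟨Φloc.source ∩ (U ∩ Φ ⁻¹' B), ?_, ⟨hpsrc, hp, Metric.mem_ball_self hρpos⟩,
    fun x hx => hx.2.1, ?_⟩
  · apply Φloc.open_source.inter
    apply ContinuousOn.isOpen_inter_preimage ?_ hUopen Metric.isOpen_ball
    intro q hq
    apply ContinuousAt.continuousWithinAt
    exact (hDF q hq).continuousAt
  · refine ⟨fun z => L (Φloc.symm (z.1, z.2.1, p.2.2.1, z.2.2.1, z.2.2.2)), ?_⟩
    rintro x ⟨hxsrc, hxU, hxB⟩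
    have hy := hconst (Φ x) hxB
    have hΦx : Φ x = ((x.1, x.2.1, x.2.2.1,
        u (x.1, x.2.1, x.2.2.1, x.2.2.2.1), x.2.2.2.2) : P5) := rfl
    have hlinv : Φloc.symm (Φ x) = x := by rw [← hcoe]; exact Φloc.left_inv hxsrc
    rw [hlinv] at hy
    rw [← hy, hΦx]


lemma phiR_deriv (u : P4 → ℝ) (q : P5)
    (hu : DifferentiableAt ℝ u (q.1, q.2.1, q.2.2.1, q.2.2.2.1)) :
    ∃ D : P5 →L[ℝ] P5,
      HasFDerivAt (fun x : P5 =>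
        ((x.1, x.2.1, u (x.1, x.2.1, x.2.2.1, x.2.2.2.1), x.2.2.2.1, x.2.2.2.2) : P5)) D q ∧
      ∀ v : P5, D v = (v.1, v.2.1,
        fderiv ℝ u (q.1, q.2.1, q.2.2.1, q.2.2.2.1) (v.1, v.2.1, v.2.2.1, v.2.2.2.1),
        v.2.2.2.1, v.2.2.2.2) := by
  have hq : HasFDerivAt (id : P5 → P5) (ContinuousLinearMap.id ℝ P5) q := hasFDerivAt_id q
  have hπ := hq.fst.prodMk (hq.snd.fst.prodMk (hq.snd.snd.fst.prodMk hq.snd.snd.snd.fst))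
  have hu5 := hu.hasFDerivAt.comp q hπ
  have hm := hq.fst.prodMk (hq.snd.fst.prodMk (hu5.prodMk
    (hq.snd.snd.snd.fst.prodMk hq.snd.snd.snd.snd)))
  refine ⟨_, hm, fun v => ?_⟩
  simp only [ContinuousLinearMap.coe_comp', Function.comp_apply,
    ContinuousLinearMap.prod_apply, ContinuousLinearMap.coe_fst',
    ContinuousLinearMap.coe_snd', ContinuousLinearMap.coe_id', id_eq]


lemma loc_rep_R (u : P4 → ℝ) (U : Set P5) (hUopen : IsOpen U)
    (hu : ∀ q ∈ U, ContDiffAt ℝ (⊤ : ℕ∞) u (q.1, q.2.1, q.2.2.1, q.2.2.2.1))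
    (hut : ∀ q ∈ U, dTd4 u (q.1, q.2.1, q.2.2.1, q.2.2.2.1) ≠ 0)
    (L : P5 → ℝ) (hL : ∀ q ∈ U, DifferentiableAt ℝ L q)
    (hPDE : ∀ q ∈ U, pTd L q * dRd4 u (q.1, q.2.1, q.2.2.1, q.2.2.2.1)
      = pRd L q * dTd4 u (q.1, q.2.1, q.2.2.1, q.2.2.2.1))
    (p : P5) (hp : p ∈ U) :
    ∃ V : Set P5, IsOpen V ∧ p ∈ V ∧ V ⊆ U ∧
      ∃ G : ℝ × ℝ × ℝ × ℝ → ℝ, ∀ p' ∈ V,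
        L p' = G (p'.1, p'.2.1, u (p'.1, p'.2.1, p'.2.2.1, p'.2.2.2.1), p'.2.2.2.2) := by
  classical
  set Φ : P5 → P5 := fun x =>
    ((x.1, x.2.1, u (x.1, x.2.1, x.2.2.1, x.2.2.2.1), x.2.2.2.1, x.2.2.2.2) : P5) with hΦdef
  -- derivative data at every point of U
  have hD : ∀ q ∈ U, ∃ D : P5 →L[ℝ] P5, HasFDerivAt Φ D q ∧
      ∀ v : P5, D v = (v.1, v.2.1,
        fderiv ℝ u (q.1, q.2.1, q.2.2.1, q.2.2.2.1) (v.1, v.2.1, v.2.2.1, v.2.2.2.1),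
        v.2.2.2.1, v.2.2.2.2) :=
    fun q hq => phiR_deriv u q ((hu q hq).differentiableAt (by simp))
  choose! D hDF hDval using hD
  -- each D q is a continuous linear equivalence
  have hbij : ∀ q ∈ U, Function.Bijective (D q) := by
    intro q hq
    have hinj : Function.Injective (D q) := by
      rw [injective_iff_map_eq_zero]
      rintro ⟨v1, v2, v3, v4, v5⟩ hv0
      have h := (hDval q hq (v1, v2, v3, v4, v5)).symm.trans hv0
      simp only [Prod.ext_iff, Prod.fst_zero, Prod.snd_zero] at h
      obtain ⟨h1, h2, h3, h4, h5⟩ := h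
      subst h1 h2 h4
      have h3' : fderiv ℝ u (q.1, q.2.1, q.2.2.1, q.2.2.2.1) ((0:ℝ), (0:ℝ), v3, (0:ℝ)) = 0 := h3
      rw [fderiv4_eval] at h3'
      have hv3 : v3 = 0 := by
        rcases mul_eq_zero.mp (by linarith [h3'] : v3 * dTd4 u (q.1, q.2.1, q.2.2.1, q.2.2.2.1) = 0) with h | h
        · exact h
        · exact absurd h (hut q hq)
      subst hv3 h5
      rfl
    exact ⟨hinj, (LinearMap.injective_iff_surjective
      (f := ((D q).toLinearMap : P5 →ₗ[ℝ] P5))).mp hinj⟩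
  -- upgrade to continuous linear equivs
  have hequiv : ∀ q ∈ U, ∃ e : P5 ≃L[ℝ] P5, (e : P5 →L[ℝ] P5) = D q := by
    intro q hq
    refine ⟨(LinearEquiv.ofBijective ((D q).toLinearMap) (hbij q hq)).toContinuousLinearEquiv,
      ContinuousLinearMap.ext fun v => ?_⟩
    show (LinearEquiv.ofBijective ((D q).toLinearMap) (hbij q hq)).toContinuousLinearEquiv v = D q v
    rw [LinearEquiv.coe_toContinuousLinearEquiv']
    rfl
  choose! E hE using hequiv
  have hEF : ∀ q ∈ U, HasFDerivAt Φ ((E q : P5 →L[ℝ] P5)) q := by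
    intro q hq; rw [hE q hq]; exact hDF q hq
  -- the local homeomorphism at p
  have hΦcd : ContDiffAt ℝ (⊤ : ℕ∞) Φ p := by
    refine ContDiffAt.prodMk (by fun_prop) (ContDiffAt.prodMk (by fun_prop)
      (ContDiffAt.prodMk ?_ (ContDiffAt.prodMk (by fun_prop) (by fun_prop))))
    exact (hu p hp).comp p (by fun_prop)
  set Φloc := hΦcd.toOpenPartialHomeomorph Φ (hEF p hp) (by simp) with hΦloc
  have hcoe : (Φloc : P5 → P5) = Φ := hΦcd.toOpenPartialHomeomorph_coe (hEF p hp) (by simp)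
  have hpsrc : p ∈ Φloc.source := hΦcd.mem_toOpenPartialHomeomorph_source (hEF p hp) (by simp)
  -- shrink target
  have hWopen : IsOpen (Φloc.target ∩ Φloc.symm ⁻¹' (Φloc.source ∩ U)) :=
    Φloc.symm.isOpen_inter_preimage (Φloc.open_source.inter hUopen)
  have hΦpW : Φ p ∈ Φloc.target ∩ Φloc.symm ⁻¹' (Φloc.source ∩ U) := by
    have h1 : Φ p ∈ Φloc.target := by rw [← hcoe]; exact Φloc.map_source hpsrc
    refine ⟨h1, ?_⟩
    have h2 : Φloc.symm (Φ p) = p := by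
      rw [← hcoe]; exact Φloc.left_inv hpsrc
    simp [h2, hpsrc, hp]
  obtain ⟨ρ, hρpos, hball⟩ := Metric.isOpen_iff.mp hWopen _ hΦpW
  set B := Metric.ball (Φ p) ρ with hB
  -- the composite L ∘ Φloc.symm has vanishing third partial on B
  have hsymm : ∀ y ∈ B, HasFDerivAt (fun z => L (Φloc.symm z))
      ((fderiv ℝ L (Φloc.symm y)).comp ((E (Φloc.symm y)).symm : P5 →L[ℝ] P5)) y := by
    intro y hy
    obtain ⟨hyt, hyq⟩ := hball hy
    obtain ⟨hqsrc, hqU⟩ := hyq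
    have hsym : HasFDerivAt Φloc.symm (((E (Φloc.symm y)).symm : P5 →L[ℝ] P5)) y :=
      Φloc.hasFDerivAt_symm hyt (by rw [hcoe]; exact hEF _ hqU)
    exact ((hL _ hqU).hasFDerivAt.comp y hsym)
  have hval3 : ∀ y ∈ B, ((fderiv ℝ L (Φloc.symm y)).comp
      ((E (Φloc.symm y)).symm : P5 →L[ℝ] P5)) ((0:ℝ),(0:ℝ),(0:ℝ),(1:ℝ),(0:ℝ)) = 0 := by
    intro y hy
    obtain ⟨hyt, hqsrc, hqU⟩ := hball hy
    set q := Φloc.symm y with hqdef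
    set z4 : P4 := (q.1, q.2.1, q.2.2.1, q.2.2.2.1) with hz4
    set δ : ℝ := - dRd4 u z4 / dTd4 u z4 with hδ
    have hEsymm : (E q).symm ((0:ℝ),(0:ℝ),(0:ℝ),(1:ℝ),(0:ℝ))
        = (((0:ℝ),(0:ℝ),δ,(1:ℝ),(0:ℝ)) : P5) := by
      rw [ContinuousLinearEquiv.symm_apply_eq]
      have := hDval q hqU (((0:ℝ),(0:ℝ),δ,(1:ℝ),(0:ℝ)) : P5)
      have happ : E q (((0:ℝ),(0:ℝ),δ,(1:ℝ),(0:ℝ)) : P5)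
          = D q (((0:ℝ),(0:ℝ),δ,(1:ℝ),(0:ℝ)) : P5) := by
        rw [← hE q hqU]; rfl
      rw [happ, this]
      have hT : dTd4 u z4 ≠ 0 := hut q hqU
      refine Prod.ext rfl (Prod.ext rfl (Prod.ext ?_ rfl))
      show (0:ℝ) = fderiv ℝ u (q.1, q.2.1, q.2.2.1, q.2.2.2.1) ((0:ℝ),(0:ℝ),δ,(1:ℝ))
      rw [fderiv4_eval, hδ]
      field_simp
      simp only [hz4]
      ring
    rw [ContinuousLinearMap.comp_apply]
    have : ((E q).symm : P5 →L[ℝ] P5) ((0:ℝ),(0:ℝ),(0:ℝ),(1:ℝ),(0:ℝ))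
        = (((0:ℝ),(0:ℝ),δ,(1:ℝ),(0:ℝ)) : P5) := hEsymm
    rw [this, fderiv5_eval]
    have hT := hut q hqU
    have hP := hPDE q hqU
    rw [hδ, hz4]
    field_simp
    linarith [hP]
  -- constancy of L ∘ Φloc.symm in the third coordinate on B
  have hconst : ∀ y ∈ B, L (Φloc.symm (y.1, y.2.1, y.2.2.1, p.2.2.2.1, y.2.2.2.2))
      = L (Φloc.symm y) := by
    intro y hy
    set ℓ : ℝ → P5 := fun s => (y.1, y.2.1, y.2.2.1, s, y.2.2.2.2) with hℓ
    set T : Set ℝ := ℓ ⁻¹' B with hT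
    have hTopen : IsOpen T := (Metric.isOpen_ball).preimage (by fun_prop)
    have hTconv : Convex ℝ T := by
      intro s1 h1 s2 h2 α β hα hβ hab
      have hα' : α = 1 - β := by linarith
      subst hα'
      have : ℓ ((1 - β) * s1 + β * s2) = (1 - β) • ℓ s1 + β • ℓ s2 := by
        simp only [hℓ, Prod.smul_mk, Prod.mk_add_mk, smul_eq_mul]
        refine Prod.ext ?_ (Prod.ext ?_ (Prod.ext ?_ (Prod.ext ?_ ?_))) <;> simp <;> ring
      show ℓ ((1 - β) • s1 + β • s2) ∈ B
      rw [smul_eq_mul, smul_eq_mul, this]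
      exact (convex_ball (Φ p) ρ) h1 h2 hα hβ hab
    have hy3 : y.2.2.2.1 ∈ T := by
      have : ℓ y.2.2.2.1 = y := rfl
      simp only [hT, mem_preimage, this]
      exact hy
    have hp3 : p.2.2.2.1 ∈ T := by
      simp only [hT, mem_preimage, hℓ]
      have hd : dist ((y.1, y.2.1, y.2.2.1, p.2.2.2.1, y.2.2.2.2) : P5) (Φ p) ≤ dist y (Φ p) := by
        have h5 : (Φ p).2.2.2.1 = p.2.2.2.1 := rfl
        simp only [Prod.dist_eq]
        apply max_le_max le_rfl
        apply max_le_max le_rfl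
        apply max_le_max le_rfl
        apply max_le_max _ le_rfl
        rw [h5, dist_self]
        exact dist_nonneg
      exact lt_of_le_of_lt hd (Metric.mem_ball.mp hy)
    have hg : ∀ s ∈ T, HasDerivAt (fun s' => L (Φloc.symm (ℓ s'))) 0 s := by
      intro s hs
      have hline : HasDerivAt ℓ (((0:ℝ),(0:ℝ),(0:ℝ),(1:ℝ),(0:ℝ)) : P5) s := by
        refine (hasDerivAt_const s y.1).prodMk ((hasDerivAt_const s y.2.1).prodMk
          ((hasDerivAt_const s y.2.2.1).prodMk ((hasDerivAt_id s).prodMk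
            (hasDerivAt_const s y.2.2.2.2))))
      have hF := hsymm (ℓ s) hs
      have := hF.comp_hasDerivAt s hline
      rw [hval3 (ℓ s) hs] at this
      exact this
    -- g is constant on convex open T
    have hgd : DifferentiableOn ℝ (fun s' => L (Φloc.symm (ℓ s'))) T :=
      fun s hs => ((hg s hs).differentiableAt).differentiableWithinAt
    have hfd0 : ∀ s ∈ T, fderivWithin ℝ (fun s' => L (Φloc.symm (ℓ s'))) T s = 0 := by
      intro s hs
      rw [fderivWithin_of_isOpen hTopen hs,
        (hasDerivAt_iff_hasFDerivAt.mp (hg s hs)).fderiv]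
      ext1
      simp
    have := hTconv.is_const_of_fderivWithin_eq_zero hgd hfd0 hp3 hy3
    simpa [hℓ] using this
  -- assemble
  refine ⟨Φloc.source ∩ (U ∩ Φ ⁻¹' B), ?_, ⟨hpsrc, hp, Metric.mem_ball_self hρpos⟩,
    fun x hx => hx.2.1, ?_⟩
  · apply Φloc.open_source.inter
    apply ContinuousOn.isOpen_inter_preimage ?_ hUopen Metric.isOpen_ball
    intro q hq
    apply ContinuousAt.continuousWithinAt
    exact (hDF q hq).continuousAt
  · refine ⟨fun z => L (Φloc.symm (z.1, z.2.1, z.2.2.1, p.2.2.2.1, z.2.2.2)), ?_⟩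
    rintro x ⟨hxsrc, hxU, hxB⟩
    have hy := hconst (Φ x) hxB
    have hΦx : Φ x = ((x.1, x.2.1,
        u (x.1, x.2.1, x.2.2.1, x.2.2.2.1), x.2.2.2.1, x.2.2.2.2) : P5) := rfl
    have hlinv : Φloc.symm (Φ x) = x := by rw [← hcoe]; exact Φloc.left_inv hxsrc
    rw [hlinv] at hy
    rw [← hy, hΦx]


/-- The characteristic variable `û` solves the bracket constraint
`(a₁ṫ+a₂ṙ)∂_ṫû + (a₃ṫ+a₄ṙ)∂_ṙû = 0`; hence every Lagrangian of the form `Ξ(t,r,û,w)`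
solves it, and conversely each solution is locally a function of `(t,r,û,w)` only. -/
theorem stmt19 (Ω : Set (ℝ × ℝ)) (hΩopen : IsOpen Ω) (hΩne : Ω.Nonempty)
    (c1 c2 c3 c4 : ℝ × ℝ → ℝ)
    (hc1 : ContDiffOn ℝ (⊤ : ℕ∞) c1 Ω) (hc2 : ContDiffOn ℝ (⊤ : ℕ∞) c2 Ω)
    (hc3 : ContDiffOn ℝ (⊤ : ℕ∞) c3 Ω) (hc4 : ContDiffOn ℝ (⊤ : ℕ∞) c4 Ω)
    (J : Set ℝ) (hJopen : IsOpen J) (hJconn : J.OrdConnected)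
    (hQ : ∀ q ∈ Ω, ∀ p ∈ J, c2 q * p^2 - (c4 q - c1 q) * p - c3 q ≠ 0)
    (I3 : ℝ × ℝ × ℝ → ℝ)
    (hI3 : ContDiffOn ℝ (⊤ : ℕ∞) I3 {s : ℝ × ℝ × ℝ | (s.1, s.2.1) ∈ Ω ∧ s.2.2 ∈ J})
    (hI3p : ∀ s : ℝ × ℝ × ℝ, (s.1, s.2.1) ∈ Ω → s.2.2 ∈ J →
      dP3 I3 s = (c1 (s.1, s.2.1) + c2 (s.1, s.2.1) * s.2.2) /
        (c2 (s.1, s.2.1) * s.2.2^2 - (c4 (s.1, s.2.1) - c1 (s.1, s.2.1)) * s.2.2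
          - c3 (s.1, s.2.1))) :
    -- 1. `û` solves the constraint on `𝒟`
    (∀ p ∈ Dom4 Ω J,
      (c1 (p.1, p.2.1) * p.2.2.1 + c2 (p.1, p.2.1) * p.2.2.2) * dTd4 (uhat I3) p
        + (c3 (p.1, p.2.1) * p.2.2.1 + c4 (p.1, p.2.1) * p.2.2.2) * dRd4 (uhat I3) p = 0) ∧
    -- 2. hence any `L = Ξ(t,r,û,w)` solves the constraint
    (∀ Ξ : ℝ × ℝ × ℝ × ℝ → ℝ,
      ContDiffOn ℝ (⊤ : ℕ∞) Ξ {s : ℝ × ℝ × ℝ × ℝ | (s.1, s.2.1) ∈ Ω ∧ 0 < s.2.2.1 ∧ 0 < s.2.2.2} →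
      ∀ p ∈ Dom5 Ω J,
        (c1 (p.1, p.2.1) * p.2.2.1 + c2 (p.1, p.2.1) * p.2.2.2.1) *
            pTd (fun p' => Ξ (p'.1, p'.2.1,
              uhat I3 (p'.1, p'.2.1, p'.2.2.1, p'.2.2.2.1), p'.2.2.2.2)) p
          + (c3 (p.1, p.2.1) * p.2.2.1 + c4 (p.1, p.2.1) * p.2.2.2.1) *
            pRd (fun p' => Ξ (p'.1, p'.2.1,
              uhat I3 (p'.1, p'.2.1, p'.2.2.1, p'.2.2.2.1), p'.2.2.2.2)) p = 0) ∧
    -- 3. conversely, each solution is locally a function of `(t,r,û,w)` only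
    (∀ L : P5 → ℝ, ContDiffOn ℝ (⊤ : ℕ∞) L (Dom5 Ω J) →
      (∀ p ∈ Dom5 Ω J,
        (c1 (p.1, p.2.1) * p.2.2.1 + c2 (p.1, p.2.1) * p.2.2.2.1) * pTd L p
          + (c3 (p.1, p.2.1) * p.2.2.1 + c4 (p.1, p.2.1) * p.2.2.2.1) * pRd L p = 0) →
      ∀ p ∈ Dom5 Ω J,
        (c1 (p.1, p.2.1) * p.2.2.1 + c2 (p.1, p.2.1) * p.2.2.2.1,
          c3 (p.1, p.2.1) * p.2.2.1 + c4 (p.1, p.2.1) * p.2.2.2.1) ≠ (0, 0) →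
        ∃ V : Set P5, IsOpen V ∧ p ∈ V ∧ V ⊆ Dom5 Ω J ∧
          ∃ G : ℝ × ℝ × ℝ × ℝ → ℝ, ∀ p' ∈ V,
            L p' = G (p'.1, p'.2.1,
              uhat I3 (p'.1, p'.2.1, p'.2.2.1, p'.2.2.2.1), p'.2.2.2.2)) := by
  classical
  -- open sets
  have hD4 := isOpen_Dom4 Ω J hΩopen hJopen
  have hD5 := isOpen_Dom5 Ω J hΩopen hJopen
  -- partial derivative formulas for uhat on Dom4
  have hdiffI : ∀ r4 ∈ Dom4 Ω J, DifferentiableAt ℝ I3 (r4.1, r4.2.1, r4.2.2.2 / r4.2.2.1) := by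
    intro r4 hr4
    exact (hI3.contDiffAt ((isOpen_OJ Ω J hΩopen hJopen).mem_nhds
      ⟨hr4.1, hr4.2.2⟩)).differentiableAt (by simp)
  have hdiffu : ∀ r4 ∈ Dom4 Ω J, DifferentiableAt ℝ (uhat I3) r4 := by
    intro r4 hr4
    exact (uhat_contDiffAt Ω J hΩopen hJopen I3 hI3 r4 hr4).differentiableAt (by simp)
  have hdT : ∀ r4 ∈ Dom4 Ω J, dTd4 (uhat I3) r4
      = -(Real.exp (I3 (r4.1, r4.2.1, r4.2.2.2 / r4.2.2.1))
          * (c3 (r4.1, r4.2.1) + c4 (r4.1, r4.2.1) * (r4.2.2.2 / r4.2.2.1)))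
        / (c2 (r4.1, r4.2.1) * (r4.2.2.2 / r4.2.2.1)^2
          - (c4 (r4.1, r4.2.1) - c1 (r4.1, r4.2.1)) * (r4.2.2.2 / r4.2.2.1) - c3 (r4.1, r4.2.1)) := by
    intro r4 hr4
    have h := uhat_dT I3 r4.1 r4.2.1 r4.2.2.1 r4.2.2.2 (ne_of_gt hr4.2.1)
      (hdiffI r4 hr4) (hdiffu r4 hr4)
    rw [hI3p (r4.1, r4.2.1, r4.2.2.2 / r4.2.2.1) hr4.1 hr4.2.2] at h
    dsimp only at h
    rw [h]
    have hQv := hQ _ hr4.1 _ hr4.2.2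
    set P := r4.2.2.2 / r4.2.2.1 with hP
    linear_combination (-Real.exp (I3 (r4.1, r4.2.1, P))) * mul_inv_cancel₀ hQv
  have hdR : ∀ r4 ∈ Dom4 Ω J, dRd4 (uhat I3) r4
      = Real.exp (I3 (r4.1, r4.2.1, r4.2.2.2 / r4.2.2.1))
          * (c1 (r4.1, r4.2.1) + c2 (r4.1, r4.2.1) * (r4.2.2.2 / r4.2.2.1))
        / (c2 (r4.1, r4.2.1) * (r4.2.2.2 / r4.2.2.1)^2
          - (c4 (r4.1, r4.2.1) - c1 (r4.1, r4.2.1)) * (r4.2.2.2 / r4.2.2.1) - c3 (r4.1, r4.2.1)) := by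
    intro r4 hr4
    have h := uhat_dR I3 r4.1 r4.2.1 r4.2.2.1 r4.2.2.2 (ne_of_gt hr4.2.1)
      (hdiffI r4 hr4) (hdiffu r4 hr4)
    rw [hI3p (r4.1, r4.2.1, r4.2.2.2 / r4.2.2.1) hr4.1 hr4.2.2] at h
    dsimp only at h
    rw [h]
    set P := r4.2.2.2 / r4.2.2.1 with hP
    ring
  -- part 1
  have key1 : ∀ p ∈ Dom4 Ω J,
      (c1 (p.1, p.2.1) * p.2.2.1 + c2 (p.1, p.2.1) * p.2.2.2) * dTd4 (uhat I3) p
        + (c3 (p.1, p.2.1) * p.2.2.1 + c4 (p.1, p.2.1) * p.2.2.2) * dRd4 (uhat I3) p = 0 := by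
    intro p hp
    rw [hdT p hp, hdR p hp]
    have hQv := hQ _ hp.1 _ hp.2.2
    have ha := ne_of_gt hp.2.1
    set P := p.2.2.2 / p.2.2.1 with hP
    have hb : p.2.2.2 = P * p.2.2.1 := by rw [hP]; field_simp
    rw [hb]
    field_simp
    ring
  refine ⟨key1, ?_, ?_⟩
  · -- part 2
    intro Ξ hΞ p hp
    obtain ⟨hp4, hw⟩ := hp
    have hS4 : IsOpen {s : ℝ × ℝ × ℝ × ℝ | (s.1, s.2.1) ∈ Ω ∧ 0 < s.2.2.1 ∧ 0 < s.2.2.2} := by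
      have h1 : IsOpen {s : ℝ × ℝ × ℝ × ℝ | (s.1, s.2.1) ∈ Ω} := hΩopen.preimage (by fun_prop)
      have h2 : IsOpen {s : ℝ × ℝ × ℝ × ℝ | 0 < s.2.2.1} :=
        isOpen_lt continuous_const (by fun_prop)
      have h3 : IsOpen {s : ℝ × ℝ × ℝ × ℝ | 0 < s.2.2.2} :=
        isOpen_lt continuous_const (by fun_prop)
      have : {s : ℝ × ℝ × ℝ × ℝ | (s.1, s.2.1) ∈ Ω ∧ 0 < s.2.2.1 ∧ 0 < s.2.2.2}
          = {s : ℝ × ℝ × ℝ × ℝ | (s.1, s.2.1) ∈ Ω} ∩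
            ({s : ℝ × ℝ × ℝ × ℝ | 0 < s.2.2.1} ∩ {s : ℝ × ℝ × ℝ × ℝ | 0 < s.2.2.2}) := by
        ext s; simp [and_assoc]
      rw [this]; exact h1.inter (h2.inter h3)
    have hupos : 0 < uhat I3 (p.1, p.2.1, p.2.2.1, p.2.2.2.1) := by
      have : uhat I3 (p.1, p.2.1, p.2.2.1, p.2.2.2.1)
          = p.2.2.1 * Real.exp (I3 (p.1, p.2.1, p.2.2.2.1 / p.2.2.1)) := rfl
      rw [this]
      exact mul_pos hp4.2.1 (Real.exp_pos _)
    have hmemS : ((p.1, p.2.1, uhat I3 (p.1, p.2.1, p.2.2.1, p.2.2.2.1), p.2.2.2.2) : ℝ×ℝ×ℝ×ℝ)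
        ∈ {s : ℝ × ℝ × ℝ × ℝ | (s.1, s.2.1) ∈ Ω ∧ 0 < s.2.2.1 ∧ 0 < s.2.2.2} :=
      ⟨hp4.1, hupos, hw⟩
    have hΞd : DifferentiableAt ℝ Ξ
        (p.1, p.2.1, uhat I3 (p.1, p.2.1, p.2.2.1, p.2.2.2.1), p.2.2.2.2) :=
      (hΞ.contDiffAt (hS4.mem_nhds hmemS)).differentiableAt (by simp)
    have hu4 : DifferentiableAt ℝ (uhat I3) (p.1, p.2.1, p.2.2.1, p.2.2.2.1) :=
      hdiffu _ hp4
    -- chain rule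
    have hq : HasFDerivAt (id : P5 → P5) (ContinuousLinearMap.id ℝ P5) p := hasFDerivAt_id p
    have hπ := hq.fst.prodMk (hq.snd.fst.prodMk (hq.snd.snd.fst.prodMk hq.snd.snd.snd.fst))
    have hu5 := hu4.hasFDerivAt.comp p hπ
    have hm := hq.fst.prodMk (hq.snd.fst.prodMk (hu5.prodMk hq.snd.snd.snd.snd))
    have hc : HasFDerivAt (fun p' : P5 => Ξ (p'.1, p'.2.1,
        uhat I3 (p'.1, p'.2.1, p'.2.2.1, p'.2.2.2.1), p'.2.2.2.2)) _ p :=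
      hΞd.hasFDerivAt.comp p hm
    have hT : pTd (fun p' : P5 => Ξ (p'.1, p'.2.1,
        uhat I3 (p'.1, p'.2.1, p'.2.2.1, p'.2.2.2.1), p'.2.2.2.2)) p
        = fderiv ℝ Ξ (p.1, p.2.1, uhat I3 (p.1, p.2.1, p.2.2.1, p.2.2.2.1), p.2.2.2.2)
            ((0:ℝ),(0:ℝ),(1:ℝ),(0:ℝ))
          * dTd4 (uhat I3) (p.1, p.2.1, p.2.2.1, p.2.2.2.1) := by
      rw [pTd, hc.fderiv]
      simp only [ContinuousLinearMap.coe_comp', Function.comp_apply,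
        ContinuousLinearMap.prod_apply, ContinuousLinearMap.coe_fst',
        ContinuousLinearMap.coe_snd', ContinuousLinearMap.coe_id', id_eq]
      rw [show ((0:ℝ), (0:ℝ),
          (fderiv ℝ (uhat I3) (p.1, p.2.1, p.2.2.1, p.2.2.2.1)) ((0:ℝ),(0:ℝ),(1:ℝ),(0:ℝ)), (0:ℝ))
          = (fderiv ℝ (uhat I3) (p.1, p.2.1, p.2.2.1, p.2.2.2.1)) ((0:ℝ),(0:ℝ),(1:ℝ),(0:ℝ))
            • ((0:ℝ),(0:ℝ),(1:ℝ),(0:ℝ)) by simp, map_smul, smul_eq_mul, mul_comm]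
      rfl
    have hR : pRd (fun p' : P5 => Ξ (p'.1, p'.2.1,
        uhat I3 (p'.1, p'.2.1, p'.2.2.1, p'.2.2.2.1), p'.2.2.2.2)) p
        = fderiv ℝ Ξ (p.1, p.2.1, uhat I3 (p.1, p.2.1, p.2.2.1, p.2.2.2.1), p.2.2.2.2)
            ((0:ℝ),(0:ℝ),(1:ℝ),(0:ℝ))
          * dRd4 (uhat I3) (p.1, p.2.1, p.2.2.1, p.2.2.2.1) := by
      rw [pRd, hc.fderiv]
      simp only [ContinuousLinearMap.coe_comp', Function.comp_apply,
        ContinuousLinearMap.prod_apply, ContinuousLinearMap.coe_fst',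
        ContinuousLinearMap.coe_snd', ContinuousLinearMap.coe_id', id_eq]
      rw [show ((0:ℝ), (0:ℝ),
          (fderiv ℝ (uhat I3) (p.1, p.2.1, p.2.2.1, p.2.2.2.1)) ((0:ℝ),(0:ℝ),(0:ℝ),(1:ℝ)), (0:ℝ))
          = (fderiv ℝ (uhat I3) (p.1, p.2.1, p.2.2.1, p.2.2.2.1)) ((0:ℝ),(0:ℝ),(0:ℝ),(1:ℝ))
            • ((0:ℝ),(0:ℝ),(1:ℝ),(0:ℝ)) by simp, map_smul, smul_eq_mul, mul_comm]
      rfl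
    have h1 := key1 (p.1, p.2.1, p.2.2.1, p.2.2.2.1) hp4
    dsimp only at h1
    rw [hT, hR]
    set A := fderiv ℝ Ξ (p.1, p.2.1, uhat I3 (p.1, p.2.1, p.2.2.1, p.2.2.2.1), p.2.2.2.2)
      ((0:ℝ),(0:ℝ),(1:ℝ),(0:ℝ))
    linear_combination A * h1
  · -- part 3
    intro L hLsm hPDEh p hp hnz
    have hLd : ∀ q ∈ Dom5 Ω J, DifferentiableAt ℝ L q := fun q hq =>
      (hLsm.contDiffAt (hD5.mem_nhds hq)).differentiableAt (by simp)
    -- common: the proportionality form of the PDE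
    have hprop : ∀ q ∈ Dom5 Ω J, pTd L q * dRd4 (uhat I3) (q.1, q.2.1, q.2.2.1, q.2.2.2.1)
        = pRd L q * dTd4 (uhat I3) (q.1, q.2.1, q.2.2.1, q.2.2.2.1) := by
      intro q hq
      have hq4 : ((q.1, q.2.1, q.2.2.1, q.2.2.2.1) : P4) ∈ Dom4 Ω J := hq.1
      have hPq := hPDEh q hq
      rw [hdT _ hq4, hdR _ hq4]
      dsimp only
      have ha := ne_of_gt hq4.2.1
      have hQv := hQ _ hq4.1 _ hq4.2.2
      dsimp only at hQv ha
      set P := q.2.2.2.1 / q.2.2.1 with hP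
      have hb : q.2.2.2.1 = P * q.2.2.1 := by rw [hP]; field_simp
      rw [hb] at hPq
      have hP2 : q.2.2.1 * ((c1 (q.1, q.2.1) + c2 (q.1, q.2.1) * P) * pTd L q
          + (c3 (q.1, q.2.1) + c4 (q.1, q.2.1) * P) * pRd L q) = 0 := by
        linear_combination hPq
      have hP3 : (c1 (q.1, q.2.1) + c2 (q.1, q.2.1) * P) * pTd L q
          + (c3 (q.1, q.2.1) + c4 (q.1, q.2.1) * P) * pRd L q = 0 :=
        (mul_eq_zero.mp hP2).resolve_left ha
      set E := Real.exp (I3 (q.1, q.2.1, P))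
      set Qv := c2 (q.1, q.2.1) * P^2 - (c4 (q.1, q.2.1) - c1 (q.1, q.2.1)) * P - c3 (q.1, q.2.1)
      linear_combination (E / Qv) * hP3
    have hcdu : ∀ q ∈ Dom5 Ω J, ContDiffAt ℝ (⊤ : ℕ∞) (uhat I3) (q.1, q.2.1, q.2.2.1, q.2.2.2.1) :=
      fun q hq => uhat_contDiffAt Ω J hΩopen hJopen I3 hI3 _ hq.1
    by_cases hX1 : c1 (p.1, p.2.1) * p.2.2.1 + c2 (p.1, p.2.1) * p.2.2.2.1 ≠ 0
    · -- use loc_rep_T on U1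
      set X1f : P5 → ℝ := fun q => c1 (q.1, q.2.1) * q.2.2.1 + c2 (q.1, q.2.1) * q.2.2.2.1
        with hX1f
      have hcont1 : ContinuousOn X1f (Dom5 Ω J) := by
        apply ContinuousOn.add
        · apply ContinuousOn.mul _ (by fun_prop)
          exact hc1.continuousOn.comp (by fun_prop : Continuous
            fun q : P5 => (q.1, q.2.1)).continuousOn (fun q hq => hq.1.1)
        · apply ContinuousOn.mul _ (by fun_prop)
          exact hc2.continuousOn.comp (by fun_prop : Continuous
            fun q : P5 => (q.1, q.2.1)).continuousOn (fun q hq => hq.1.1)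
      have hU1eq : {q : P5 | q ∈ Dom5 Ω J ∧ X1f q ≠ 0}
          = Dom5 Ω J ∩ X1f ⁻¹' ({(0:ℝ)}ᶜ) := by
        ext q; simp [mem_compl_iff]
      have hU1open : IsOpen {q : P5 | q ∈ Dom5 Ω J ∧ X1f q ≠ 0} := by
        rw [hU1eq]
        exact hcont1.isOpen_inter_preimage hD5 isOpen_compl_singleton
      have hur : ∀ q ∈ {q : P5 | q ∈ Dom5 Ω J ∧ X1f q ≠ 0},
          dRd4 (uhat I3) (q.1, q.2.1, q.2.2.1, q.2.2.2.1) ≠ 0 := by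
        rintro q ⟨hq5, hqX⟩
        have hq4 : ((q.1, q.2.1, q.2.2.1, q.2.2.2.1) : P4) ∈ Dom4 Ω J := hq5.1
        rw [hdR _ hq4]
        dsimp only
        have ha := ne_of_gt hq4.2.1
        have hQv := hQ _ hq4.1 _ hq4.2.2
        dsimp only at hQv ha
        set P := q.2.2.2.1 / q.2.2.1 with hP
        have hN : c1 (q.1, q.2.1) + c2 (q.1, q.2.1) * P ≠ 0 := by
          intro h0
          apply hqX
          have hb : q.2.2.2.1 = P * q.2.2.1 := by rw [hP]; field_simp
          rw [hX1f]
          dsimp only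
          rw [hb]
          linear_combination q.2.2.1 * h0
        exact div_ne_zero (mul_ne_zero (Real.exp_ne_zero _) hN) hQv
      obtain ⟨V, hVopen, hpV, hVsub, G, hG⟩ := loc_rep_T (uhat I3)
        {q : P5 | q ∈ Dom5 Ω J ∧ X1f q ≠ 0} hU1open
        (fun q hq => hcdu q hq.1) hur L (fun q hq => hLd q hq.1)
        (fun q hq => hprop q hq.1) p ⟨hp, hX1⟩
      exact ⟨V, hVopen, hpV, fun x hx => (hVsub hx).1, G, hG⟩
    · -- X1 = 0 at p, so X2 ≠ 0; use loc_rep_R on U2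
      push_neg at hX1
      have hX2 : c3 (p.1, p.2.1) * p.2.2.1 + c4 (p.1, p.2.1) * p.2.2.2.1 ≠ 0 := by
        intro h0
        exact hnz (by rw [hX1, h0])
      set X2f : P5 → ℝ := fun q => c3 (q.1, q.2.1) * q.2.2.1 + c4 (q.1, q.2.1) * q.2.2.2.1
        with hX2f
      have hcont2 : ContinuousOn X2f (Dom5 Ω J) := by
        apply ContinuousOn.add
        · apply ContinuousOn.mul _ (by fun_prop)
          exact hc3.continuousOn.comp (by fun_prop : Continuous
            fun q : P5 => (q.1, q.2.1)).continuousOn (fun q hq => hq.1.1)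
        · apply ContinuousOn.mul _ (by fun_prop)
          exact hc4.continuousOn.comp (by fun_prop : Continuous
            fun q : P5 => (q.1, q.2.1)).continuousOn (fun q hq => hq.1.1)
      have hU2eq : {q : P5 | q ∈ Dom5 Ω J ∧ X2f q ≠ 0}
          = Dom5 Ω J ∩ X2f ⁻¹' ({(0:ℝ)}ᶜ) := by
        ext q; simp [mem_compl_iff]
      have hU2open : IsOpen {q : P5 | q ∈ Dom5 Ω J ∧ X2f q ≠ 0} := by
        rw [hU2eq]
        exact hcont2.isOpen_inter_preimage hD5 isOpen_compl_singleton
      have hut : ∀ q ∈ {q : P5 | q ∈ Dom5 Ω J ∧ X2f q ≠ 0},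
          dTd4 (uhat I3) (q.1, q.2.1, q.2.2.1, q.2.2.2.1) ≠ 0 := by
        rintro q ⟨hq5, hqX⟩
        have hq4 : ((q.1, q.2.1, q.2.2.1, q.2.2.2.1) : P4) ∈ Dom4 Ω J := hq5.1
        rw [hdT _ hq4]
        dsimp only
        have ha := ne_of_gt hq4.2.1
        have hQv := hQ _ hq4.1 _ hq4.2.2
        dsimp only at hQv ha
        set P := q.2.2.2.1 / q.2.2.1 with hP
        have hN : c3 (q.1, q.2.1) + c4 (q.1, q.2.1) * P ≠ 0 := by
          intro h0
          apply hqX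
          have hb : q.2.2.2.1 = P * q.2.2.1 := by rw [hP]; field_simp
          rw [hX2f]
          dsimp only
          rw [hb]
          linear_combination q.2.2.1 * h0
        apply div_ne_zero _ hQv
        intro h0
        apply hN
        have := neg_eq_zero.mp h0
        rcases mul_eq_zero.mp this with h | h
        · exact absurd h (Real.exp_ne_zero _)
        · exact h
      obtain ⟨V, hVopen, hpV, hVsub, G, hG⟩ := loc_rep_R (uhat I3)
        {q : P5 | q ∈ Dom5 Ω J ∧ X2f q ≠ 0} hU2open
        (fun q hq => hcdu q hq.1) hut L (fun q hq => hLd q hq.1)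
        (fun q hq => hprop q hq.1) p ⟨hp, hX2⟩
      exact ⟨V, hVopen, hpV, fun x hx => (hVsub hx).1, G, hG⟩
end
end
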